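/- arXiv:2207.09451 — 2 statements merged into one kernel-verified Lean document; each statement's English description precedes it below -/
import Mathlib

section
/- For every integer m ≥ 0, π/2 = ln((L_{2m}² + L_{2m}·√(L_{2m}² + 4) + 2)/2) − 4 · ∑_{n=0}^∞ (1/(4n+3)) · L_{2m(4n+3)} · (2 / (L_{2m} + √(L_{2m}² + 4)))^{4n+3}, where the series on the right converges. -/
/-- Lucas numbers: `L 0 = 2`, `L 1 = 1`, `L (n+2) = L (n+1) + L n`. -/
def lucasNum : ℕ → ℕ
  | 0 => 2
  | 1 => 1
  | n + 2 => lucasNum (n + 1) + lucasNum n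

open Real

lemma lucasNum_binet : ∀ n : ℕ, (lucasNum n : ℝ) = goldenRatio ^ n + goldenConj ^ n := by
  intro n
  induction n using Nat.twoStepInduction with
  | zero => norm_num [lucasNum]
  | one =>
    show ((lucasNum 1 : ℕ) : ℝ) = goldenRatio ^ 1 + goldenConj ^ 1
    rw [pow_one, pow_one, goldenRatio_add_goldenConj]
    norm_num [lucasNum]
  | more n ih1 ih2 =>
    have h : lucasNum (n + 2) = lucasNum (n + 1) + lucasNum n := rfl
    rw [h]
    push_cast
    rw [ih1, ih2]
    have hg : goldenRatio ^ 2 = goldenRatio + 1 := goldenRatio_sq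
    have hc : goldenConj ^ 2 = goldenConj + 1 := goldenConj_sq
    have e1 : goldenRatio ^ (n + 2) = goldenRatio ^ n * (goldenRatio + 1) := by
      rw [← hg]; ring
    have e2 : goldenConj ^ (n + 2) = goldenConj ^ n * (goldenConj + 1) := by
      rw [← hc]; ring
    rw [e1, e2]; ring

lemma lucas_quarter_hasSum {t : ℝ} (h0 : 0 ≤ t) (h1 : t < 1) :
    HasSum (fun n : ℕ => t ^ (4 * n + 3) / (4 * (n : ℝ) + 3))
      (((Real.log (1 + t) - Real.log (1 - t)) / 2 - Real.arctan t) / 2) := by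
  have ha : |t| < 1 := by rwa [abs_of_nonneg h0]
  have hA := (hasSum_log_sub_log_of_abs_lt_one ha).div_const 2
  have hB := Real.hasSum_arctan (x := t) (by rwa [Real.norm_eq_abs])
  have hd : HasSum
      (fun k : ℕ => 2 * (1 / (2 * (k:ℝ) + 1)) * t ^ (2 * k + 1) / 2
        - (-1) ^ k * t ^ (2 * k + 1) / ((2 * k + 1 : ℕ) : ℝ))
      ((Real.log (1 + t) - Real.log (1 - t)) / 2 - Real.arctan t) := hA.sub hB
  have hinj : Function.Injective (fun n : ℕ => 2 * n + 1) := fun a b h => by simp only at h; omega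
  have hsupp : ∀ k ∉ Set.range (fun n : ℕ => 2 * n + 1),
      (2 * (1 / (2 * (k:ℝ) + 1)) * t ^ (2 * k + 1) / 2
        - (-1) ^ k * t ^ (2 * k + 1) / ((2 * k + 1 : ℕ) : ℝ)) = 0 := by
    intro k hk
    obtain ⟨j, rfl⟩ : ∃ j, k = 2 * j := by
      rcases Nat.even_or_odd k with ⟨j, hj⟩ | ⟨j, hj⟩
      · exact ⟨j, by omega⟩
      · exact absurd ⟨j, show 2*j+1 = k by omega⟩ hk
    have hneg : ((-1 : ℝ)) ^ (2 * j) = 1 := by rw [pow_mul]; norm_num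
    rw [hneg]
    push_cast
    ring
  have h2 : HasSum (fun n : ℕ =>
      (2 * (1 / (2 * ((2*n+1 : ℕ):ℝ) + 1)) * t ^ (2 * (2*n+1) + 1) / 2
        - (-1) ^ (2*n+1) * t ^ (2 * (2*n+1) + 1) / ((2 * (2*n+1) + 1 : ℕ) : ℝ)) / 2)
      (((Real.log (1 + t) - Real.log (1 - t)) / 2 - Real.arctan t) / 2) :=
    ((hinj.hasSum_iff hsupp).mpr hd).div_const 2
  have h3 : ∀ n : ℕ, (2 * (1 / (2 * ((2*n+1 : ℕ):ℝ) + 1)) * t ^ (2 * (2*n+1) + 1) / 2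
      - (-1) ^ (2*n+1) * t ^ (2*(2*n+1)+1) / ((2*(2*n+1)+1 : ℕ):ℝ)) / 2
      = t ^ (4*n+3) / (4*(n:ℝ)+3) := by
    intro n
    have he : 2*(2*n+1)+1 = 4*n+3 := by ring
    have hneg : ((-1:ℝ)) ^ (2*n+1) = -1 := Odd.neg_one_pow ⟨n, by ring⟩
    rw [he, hneg]
    have hne : (4*(n:ℝ)+3) ≠ 0 := by positivity
    push_cast
    field_simp
    ring

  exact funext h3 ▸ h2

theorem pi_div_two_lucas_subseries (m : ℕ) :
    Summable
      (fun n : ℕ => 1 / (4 * (n : ℝ) + 3) *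
        (lucasNum (2 * m * (4 * n + 3)) : ℝ) *
        (2 / ((lucasNum (2 * m) : ℝ) +
          Real.sqrt ((lucasNum (2 * m) : ℝ) ^ 2 + 4))) ^ (4 * n + 3)) ∧
    Real.pi / 2 =
      Real.log (((lucasNum (2 * m) : ℝ) ^ 2 +
        (lucasNum (2 * m) : ℝ) *
          Real.sqrt ((lucasNum (2 * m) : ℝ) ^ 2 + 4) + 2) / 2) -
      4 * ∑' n : ℕ, 1 / (4 * (n : ℝ) + 3) *
        (lucasNum (2 * m * (4 * n + 3)) : ℝ) *
        (2 / ((lucasNum (2 * m) : ℝ) +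
          Real.sqrt ((lucasNum (2 * m) : ℝ) ^ 2 + 4))) ^ (4 * n + 3) := by
  set L : ℝ := (lucasNum (2 * m) : ℝ) with hLdef
  set s : ℝ := Real.sqrt (L ^ 2 + 4) with hsdef
  have hLnn : 0 ≤ L := by rw [hLdef]; positivity
  have hs2 : s ^ 2 = L ^ 2 + 4 := by rw [hsdef]; exact Real.sq_sqrt (by positivity)
  have hspos : 0 < s := by rw [hsdef]; exact Real.sqrt_pos.mpr (by positivity)
  set x : ℝ := goldenRatio ^ (2 * m) with hxdef
  have hxpos : 0 < x := by rw [hxdef]; exact pow_pos goldenRatio_pos _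
  have hx0 : x ≠ 0 := ne_of_gt hxpos
  have hx1 : 1 ≤ x := by rw [hxdef]; exact one_le_pow₀ (le_of_lt one_lt_goldenRatio)
  have hxinv : x * x⁻¹ = 1 := mul_inv_cancel₀ hx0
  have hψ : goldenConj ^ (2 * m) = x⁻¹ := by
    have h1 : x * goldenConj ^ (2 * m) = 1 := by
      rw [hxdef, ← mul_pow, goldenRatio_mul_goldenConj, pow_mul]; norm_num
    exact eq_inv_of_mul_eq_one_left (by linarith [mul_comm (goldenConj ^ (2*m)) x, h1,
      (mul_comm x (goldenConj ^ (2*m))).symm.trans h1])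
  have hL : L = x + x⁻¹ := by
    rw [hLdef, lucasNum_binet, hψ, hxdef]
  have hlk : ∀ k : ℕ, (lucasNum (2 * m * k) : ℝ) = x ^ k + (x⁻¹) ^ k := by
    intro k
    rw [lucasNum_binet, pow_mul goldenRatio (2*m) k, pow_mul goldenConj (2*m) k, ← hxdef, hψ]
  clear_value x
  have hL2 : 2 ≤ L := by
    rw [hL]
    nlinarith [sq_nonneg (x - 1), hxpos, hxinv]
  set y : ℝ := (L + s) / 2 with hydef
  have hypos : 0 < y := by rw [hydef]; positivity
  have hy0 : y ≠ 0 := ne_of_gt hypos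
  have hy2 : y ^ 2 = L * y + 1 := by
    rw [hydef]; linear_combination hs2 / 4
  have hLs : L + s = 2 * y := by rw [hydef]; ring
  clear_value y
  have hy1 : 1 < y := by nlinarith [hy2, hL2, hypos]
  have hyx : x < y := by
    have hx' : 0 < x⁻¹ := by positivity
    nlinarith [hy2, hL, hypos, hx', mul_pos hx' hypos]
  set a : ℝ := x / y with hadef
  set b : ℝ := x⁻¹ / y with hbdef
  have ha0 : 0 ≤ a := by rw [hadef]; positivity
  have hb0 : 0 ≤ b := by rw [hbdef]; positivity
  have ha1 : a < 1 := by rw [hadef]; exact (div_lt_one hypos).mpr hyx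
  have hb1 : b < 1 := by
    rw [hbdef, div_lt_one hypos]
    calc x⁻¹ ≤ 1 := by rw [inv_le_one_iff₀]; right; exact hx1
    _ < y := hy1
  have hab' : a * b = 1 / y ^ 2 := by
    rw [hadef, hbdef, div_mul_div_comm, hxinv, ← pow_two]
  have haL : a + b = L / y := by rw [hadef, hbdef, hL]; ring
  clear_value a b
  -- the two sub-series
  have hsa := lucas_quarter_hasSum ha0 ha1
  have hsb := lucas_quarter_hasSum hb0 hb1
  have hsum := hsa.add hsb
  -- term identification
  have hq : 2 / (L + s) = y⁻¹ := by
    rw [hLs]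
    field_simp
  have hterm : ∀ n : ℕ, 1 / (4 * (n : ℝ) + 3) *
        (lucasNum (2 * m * (4 * n + 3)) : ℝ) *
        (2 / (L + s)) ^ (4 * n + 3)
      = a ^ (4*n+3) / (4*(n:ℝ)+3) + b ^ (4*n+3) / (4*(n:ℝ)+3) := by
    intro n
    rw [hlk, hq, hadef, hbdef, div_pow, div_pow, inv_pow]
    ring
  constructor
  · exact hsum.summable.congr fun n => (hterm n).symm
  rw [tsum_congr hterm, hsum.tsum_eq]
  -- arctan part
  have hy2pos : (0:ℝ) < y ^ 2 := by positivity
  have hablt : a * b < 1 := by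
    rw [hab', div_lt_one hy2pos]; nlinarith [hy1]
  have hne1 : 1 - a * b ≠ 0 := ne_of_gt (by linarith)
  have harc : Real.arctan a + Real.arctan b = π / 4 := by
    rw [Real.arctan_add hablt]
    have he2 : 1 - a * b = L / y := by
      rw [hab']
      field_simp
      linear_combination hy2
    have h1 : (a + b) / (1 - a * b) = 1 := by
      rw [div_eq_one_iff_eq hne1, haL, he2]
    rw [h1, Real.arctan_one]
  -- log part
  have h1a : (0:ℝ) < 1 + a := by linarith
  have h2a : (0:ℝ) < 1 - a := by linarith
  have h1b : (0:ℝ) < 1 + b := by linarith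
  have h2b : (0:ℝ) < 1 - b := by linarith
  have hprod : (1 + a) * (1 + b) = y ^ 2 * ((1 - a) * (1 - b)) := by
    have h4 : (y + x) * (y + x⁻¹) = 2 * y ^ 2 := by
      linear_combination -hy2 - y * hL + hxinv
    have h5 : (y - x) * (y - x⁻¹) = 2 := by
      linear_combination hy2 + y * hL + hxinv
    have ea : 1 + a = (y + x) / y := by rw [hadef, add_div, div_self hy0]
    have eb : 1 + b = (y + x⁻¹) / y := by rw [hbdef, add_div, div_self hy0]
    have ea' : 1 - a = (y - x) / y := by rw [hadef, sub_div, div_self hy0]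
    have eb' : 1 - b = (y - x⁻¹) / y := by rw [hbdef, sub_div, div_self hy0]
    rw [ea, eb, ea', eb', div_mul_div_comm, div_mul_div_comm, h4, h5]
    field_simp
  have hlog : (Real.log (1 + a) - Real.log (1 - a)) +
      (Real.log (1 + b) - Real.log (1 - b)) = 2 * Real.log y := by
    have e1 : Real.log ((1+a)*(1+b)) = Real.log (1+a) + Real.log (1+b) :=
      Real.log_mul (ne_of_gt h1a) (ne_of_gt h1b)
    have e2 : Real.log (y^2 * ((1-a)*(1-b)))
        = 2 * Real.log y + (Real.log (1-a) + Real.log (1-b)) := by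
      rw [Real.log_mul (by positivity) (by positivity),
        Real.log_pow, Real.log_mul (ne_of_gt h2a) (ne_of_gt h2b)]
      push_cast; ring
    have h6 := hprod ▸ e1
    rw [e2] at h6
    linarith
  -- log argument
  have harg : (L ^ 2 + L * s + 2) / 2 = y ^ 2 := by
    rw [hydef]; linear_combination -hs2 / 4
  rw [harg, show Real.log (y^2) = 2 * Real.log y by
    rw [Real.log_pow]; push_cast; ring]
  linarith [hlog, harc]
end

section
/- For every integer m ≥ 0, π/6 = ln(((9 + 5√3)·√5·(√5·F_{2m+1}² + F_{2m+1}·√(5·F_{2m+1}² + 4(2 − √3)²)) + 4) / ((5 + 3√3)·√5·(√5·F_{2m+1}² + F_{2m+1}·√(5·F_{2m+1}² + 4(2 − √3)²)) + 4)) − 4√5 · ∑_{n=0}^∞ (1/(4n+3)) · F_{(2m+1)(4n+3)} · (2(2 − √3) / (√5·F_{2m+1} + √(5·F_{2m+1}² + 4(2 − √3)²)))^{4n+3}, where the series on the right converges. -/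
open Real goldenRatio

lemma aux_key (s3 s5 F sA D q a b : ℝ)
    (h3 : s3^2 = 3)
    (hD : D = s5*F + sA)
    (hq : q * D = 2 * (2 - s3))
    (hD2 : D^2 = 2 * (s5*F*D) + 4 * (2 - s3)^2)
    (hsub : a - b = s5*F*q) (hab : a*b = -q^2) (hDne : D ≠ 0) :
    ((9+5*s3)*s5*(s5*F^2 + F*sA) + 4) * ((1-a)*(1+b)) =
      ((5+3*s3)*s5*(s5*F^2 + F*sA) + 4) * ((1+a)*(1-b)) := by
  subst hD
  set t : ℝ := 2 - s3 with ht
  apply mul_right_cancel₀ (pow_ne_zero 2 hDne)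
  set u : ℝ := s5*F*(s5*F + sA) with hu
  set Nt : ℝ := (9+5*s3)*s5*(s5*F^2 + F*sA) + 4 with hNt
  set Dt : ℝ := (5+3*s3)*s5*(s5*F^2 + F*sA) + 4 with hDt
  linear_combination (16*u^2 + 16*(s3-2)*u) * h3 + (Nt - Dt) * hD2
    + (Nt*(q*(s5*F+sA)+2*t-u) - Dt*(q*(s5*F+sA)+2*t+u)) * hq
    + (-(Nt+Dt)*(s5*F+sA)^2) * hsub + ((Dt-Nt)*(s5*F+sA)^2) * hab

lemma arctan_two_sub_sqrt_three : Real.arctan (2 - Real.sqrt 3) = π / 12 := by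
  have h3 : Real.sqrt 3 ^ 2 = 3 := Real.sq_sqrt (by norm_num)
  have h3nn : (0:ℝ) ≤ Real.sqrt 3 := Real.sqrt_nonneg 3
  have h3lt : Real.sqrt 3 < 2 := by nlinarith
  have h3gt : 1 < Real.sqrt 3 := by nlinarith
  have harc3 : Real.arctan (Real.sqrt 3) = π / 3 := by
    rw [← Real.tan_pi_div_three]
    exact Real.arctan_tan (by linarith [pi_pos]) (by linarith [pi_pos])
  have h1 : Real.arctan (2 - Real.sqrt 3) + Real.arctan 1 = Real.arctan (Real.sqrt 3) := by
    rw [Real.arctan_add (by nlinarith)]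
    congr 1
    rw [div_eq_iff (by nlinarith)]
    linear_combination -h3
  have h2 := Real.arctan_one
  linarith [h1, harc3, h2]

set_option maxHeartbeats 1000000 in
theorem pi_div_six_fib_subseries (m : ℕ) :
    Summable
      (fun n : ℕ => 1 / (4 * (n : ℝ) + 3) *
        (Nat.fib ((2 * m + 1) * (4 * n + 3)) : ℝ) *
        (2 * (2 - Real.sqrt 3) / (Real.sqrt 5 * (Nat.fib (2 * m + 1) : ℝ) +
          Real.sqrt (5 * (Nat.fib (2 * m + 1) : ℝ) ^ 2 +
            4 * (2 - Real.sqrt 3) ^ 2))) ^ (4 * n + 3)) ∧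
    Real.pi / 6 =
      Real.log
        (((9 + 5 * Real.sqrt 3) * Real.sqrt 5 *
            (Real.sqrt 5 * (Nat.fib (2 * m + 1) : ℝ) ^ 2 +
              (Nat.fib (2 * m + 1) : ℝ) *
                Real.sqrt (5 * (Nat.fib (2 * m + 1) : ℝ) ^ 2 +
                  4 * (2 - Real.sqrt 3) ^ 2)) + 4) /
         ((5 + 3 * Real.sqrt 3) * Real.sqrt 5 *
            (Real.sqrt 5 * (Nat.fib (2 * m + 1) : ℝ) ^ 2 +
              (Nat.fib (2 * m + 1) : ℝ) *
                Real.sqrt (5 * (Nat.fib (2 * m + 1) : ℝ) ^ 2 +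
                  4 * (2 - Real.sqrt 3) ^ 2)) + 4)) -
      4 * Real.sqrt 5 *
        ∑' n : ℕ, 1 / (4 * (n : ℝ) + 3) *
          (Nat.fib ((2 * m + 1) * (4 * n + 3)) : ℝ) *
          (2 * (2 - Real.sqrt 3) / (Real.sqrt 5 * (Nat.fib (2 * m + 1) : ℝ) +
            Real.sqrt (5 * (Nat.fib (2 * m + 1) : ℝ) ^ 2 +
              4 * (2 - Real.sqrt 3) ^ 2))) ^ (4 * n + 3) := by
  have h3 : Real.sqrt 3 ^ 2 = 3 := Real.sq_sqrt (by norm_num)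
  have h3nn : (0:ℝ) ≤ Real.sqrt 3 := Real.sqrt_nonneg 3
  have h5 : Real.sqrt 5 ^ 2 = 5 := Real.sq_sqrt (by norm_num)
  have h5nn : (0:ℝ) ≤ Real.sqrt 5 := Real.sqrt_nonneg 5
  have h5gt : 1 < Real.sqrt 5 := by nlinarith
  have h5ne : Real.sqrt 5 ≠ 0 := by positivity
  set F : ℝ := (Nat.fib (2 * m + 1) : ℝ) with hF_def
  have hF1 : (1:ℝ) ≤ F := by
    have : 1 ≤ Nat.fib (2 * m + 1) := Nat.fib_pos.mpr (by omega)
    rw [hF_def]; exact_mod_cast this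
  set t : ℝ := 2 - Real.sqrt 3 with ht_def
  have ht0 : 0 < t := by rw [ht_def]; nlinarith
  have ht1 : t < 1 := by rw [ht_def]; nlinarith
  set sA : ℝ := Real.sqrt (5 * F ^ 2 + 4 * t ^ 2) with hsA_def
  have hsA2 : sA ^ 2 = 5 * F ^ 2 + 4 * t ^ 2 := Real.sq_sqrt (by positivity)
  have hsAnn : 0 ≤ sA := Real.sqrt_nonneg _
  have hsAgt : Real.sqrt 5 * F < sA := by nlinarith
  set D : ℝ := Real.sqrt 5 * F + sA with hD_def
  have hD_pos : 0 < D := by nlinarith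
  have hD2 : D ^ 2 = 2 * (Real.sqrt 5 * F * D) + 4 * t ^ 2 := by
    rw [hD_def]; linear_combination hsA2 - F^2 * h5
  set q : ℝ := 2 * t / D with hq_def
  have hq_pos : 0 < q := by positivity
  have hqD : q * D = 2 * t := div_mul_cancel₀ _ hD_pos.ne'
  have hq1 : q < 1 := by
    rw [hq_def, div_lt_one hD_pos]
    nlinarith [mul_le_mul_of_nonneg_left hF1 h5nn]
  -- Binet quantities
  set a : ℝ := φ ^ (2 * m + 1) * q with ha_def
  set b : ℝ := ψ ^ (2 * m + 1) * q with hb_def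
  have hbinet : Real.sqrt 5 * F = φ ^ (2 * m + 1) - ψ ^ (2 * m + 1) := by
    rw [hF_def, Real.coe_fib_eq]
    field_simp
  have hsub : a - b = Real.sqrt 5 * F * q := by
    rw [ha_def, hb_def, hbinet]; ring
  have hmul : φ ^ (2 * m + 1) * ψ ^ (2 * m + 1) = -1 := by
    rw [← mul_pow, goldenRatio_mul_goldenConj, Odd.neg_one_pow ⟨m, rfl⟩]
  have hab : a * b = -q ^ 2 := by
    rw [ha_def, hb_def]; linear_combination q^2 * hmul
  have hpsiK_neg : ψ ^ (2 * m + 1) < 0 := Odd.pow_neg ⟨m, rfl⟩ goldenConj_neg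
  have hpsiK_abs : |ψ ^ (2 * m + 1)| < 1 := by
    rw [abs_pow]
    exact pow_lt_one₀ (abs_nonneg _)
      (abs_lt.mpr ⟨neg_one_lt_goldenConj, goldenConj_neg.trans one_pos⟩) (by omega)
  have hphiK_pos : 0 < φ ^ (2 * m + 1) := pow_pos goldenRatio_pos _
  have hphiK_lt : φ ^ (2 * m + 1) < Real.sqrt 5 * F := by
    rw [hbinet]; linarith
  have ha_pos : 0 < a := mul_pos hphiK_pos hq_pos
  have ha_lt1 : a < 1 := by
    rw [ha_def, hq_def, mul_div_assoc', div_lt_one hD_pos]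
    have step : φ ^ (2*m+1) * (2*t) < φ ^ (2*m+1) * 2 :=
      mul_lt_mul_of_pos_left (by linarith) hphiK_pos
    linarith
  have hb_neg : b < 0 := mul_neg_of_neg_of_pos hpsiK_neg hq_pos
  have hb_abs : |b| < 1 := by
    rw [hb_def, abs_mul, abs_of_pos hq_pos]
    have h' := mul_lt_mul_of_pos_right hpsiK_abs hq_pos
    linarith
  have ha_abs : |a| < 1 := abs_lt.mpr ⟨by linarith, ha_lt1⟩
  have hb_gt : -1 < b := (abs_lt.mp hb_abs).1
  -- key quadratic relation
  have hq_eq : t * q ^ 2 + Real.sqrt 5 * F * q = t := by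
    apply mul_right_cancel₀ (pow_ne_zero 2 hD_pos.ne')
    linear_combination (t*(q*D+2*t) + Real.sqrt 5*F*D) * hqD - t * hD2
  -- arctan identity
  have harc : Real.arctan a - Real.arctan b = π / 12 := by
    have hq2 : a * -b = q ^ 2 := by linear_combination -hab
    have hprod : a * (-b) < 1 := by rw [hq2]; nlinarith
    have h := Real.arctan_add (x := a) (y := -b) hprod
    rw [Real.arctan_neg] at h
    have hratio : (a + -b) / (1 - a * -b) = t := by
      rw [hq2, div_eq_iff (by nlinarith : (1:ℝ) - q^2 ≠ 0)]
      linear_combination hsub + hq_eq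
    rw [hratio, arctan_two_sub_sqrt_three] at h
    linarith
  -- series
  set f : ℕ → ℝ := fun n : ℕ => 1 / (4 * (n : ℝ) + 3) *
        (Nat.fib ((2 * m + 1) * (4 * n + 3)) : ℝ) * q ^ (4 * n + 3) with hf_def
  have hLa := hasSum_log_sub_log_of_abs_lt_one ha_abs
  have hLb := hasSum_log_sub_log_of_abs_lt_one hb_abs
  have hTa := Real.hasSum_arctan (x := a) (by rwa [Real.norm_eq_abs])
  have hTb := Real.hasSum_arctan (x := b) (by rwa [Real.norm_eq_abs])
  set La : ℝ := Real.log (1 + a) - Real.log (1 - a) with hLa_def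
  set Lb : ℝ := Real.log (1 + b) - Real.log (1 - b) with hLb_def
  have hG := (((hLa.mul_left (1/4)).sub (hTa.mul_left (1/2))).sub
      ((hLb.mul_left (1/4)).sub (hTb.mul_left (1/2))))
  set G : ℕ → ℝ := fun k =>
      1/4 * (2 * (1 / (2 * (k:ℝ) + 1)) * a ^ (2 * k + 1)) -
        1/2 * ((-1) ^ k * a ^ (2 * k + 1) / (2 * (k:ℝ) + 1)) -
      (1/4 * (2 * (1 / (2 * (k:ℝ) + 1)) * b ^ (2 * k + 1)) -
        1/2 * ((-1) ^ k * b ^ (2 * k + 1) / (2 * (k:ℝ) + 1))) with hG_def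
  have hG : HasSum G (1/4 * La - 1/2 * Real.arctan a - (1/4 * Lb - 1/2 * Real.arctan b)) := by
    convert hG using 2 with k
    · rfl
    rw [hG_def]
    push_cast
    ring
  have hinj : Function.Injective (fun n : ℕ => 2 * n + 1) := fun x y h => by
    have h' : 2 * x + 1 = 2 * y + 1 := h
    omega
  have hsupp : ∀ k, k ∉ Set.range (fun n : ℕ => 2 * n + 1) → G k = 0 := by
    intro k hk
    have hkeven : Even k := by
      rcases Nat.even_or_odd k with h | h
      · exact h
      · have hc := h.choose_spec
        exact absurd ⟨h.choose, (by omega : 2 * h.choose + 1 = k)⟩ hk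
    have : ((-1 : ℝ)) ^ k = 1 := hkeven.neg_one_pow
    rw [hG_def]; simp only [this]; ring
  have hGg : HasSum (G ∘ fun n : ℕ => 2 * n + 1)
      (1/4 * La - 1/2 * Real.arctan a - (1/4 * Lb - 1/2 * Real.arctan b)) :=
    (hinj.hasSum_iff hsupp).mpr hG
  have hfun : (G ∘ fun n : ℕ => 2 * n + 1) = fun n => Real.sqrt 5 * f n := by
    funext n
    have hexp : 2 * (2 * n + 1) + 1 = 4 * n + 3 := by ring
    have hodd : ((-1 : ℝ)) ^ (2 * n + 1) = -1 := Odd.neg_one_pow ⟨n, rfl⟩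
    have hfib : (Nat.fib ((2 * m + 1) * (4 * n + 3)) : ℝ) =
        (φ ^ ((2 * m + 1) * (4 * n + 3)) - ψ ^ ((2 * m + 1) * (4 * n + 3))) / Real.sqrt 5 :=
      Real.coe_fib_eq _
    have hapow : a ^ (4 * n + 3) = φ ^ ((2 * m + 1) * (4 * n + 3)) * q ^ (4 * n + 3) := by
      rw [ha_def, mul_pow, ← pow_mul]
    have hbpow : b ^ (4 * n + 3) = ψ ^ ((2 * m + 1) * (4 * n + 3)) * q ^ (4 * n + 3) := by
      rw [hb_def, mul_pow, ← pow_mul]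
    have hden : (4 * (n:ℝ) + 3) ≠ 0 := by positivity
    simp only [Function.comp, hG_def, hf_def, hexp, hodd, hfib, hapow, hbpow]
    push_cast
    field_simp
    ring
  rw [hfun] at hGg
  have hf : HasSum f ((Real.sqrt 5)⁻¹ *
      (1/4 * La - 1/2 * Real.arctan a - (1/4 * Lb - 1/2 * Real.arctan b))) := by
    have := hGg.mul_left (Real.sqrt 5)⁻¹
    have heq : (fun n => (Real.sqrt 5)⁻¹ * (Real.sqrt 5 * f n)) = f := by
      funext n; field_simp
    rwa [heq] at this
  refine ⟨hf.summable, ?_⟩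
  rw [hf.tsum_eq]
  -- logarithm part
  set Nt : ℝ := (9 + 5 * Real.sqrt 3) * Real.sqrt 5 * (Real.sqrt 5 * F ^ 2 + F * sA) + 4 with hNt_def
  set Dt : ℝ := (5 + 3 * Real.sqrt 3) * Real.sqrt 5 * (Real.sqrt 5 * F ^ 2 + F * sA) + 4 with hDt_def
  have hNt_pos : 0 < Nt := by rw [hNt_def]; positivity
  have hDt_pos : 0 < Dt := by rw [hDt_def]; positivity
  have hkey : Nt * ((1 - a) * (1 + b)) = Dt * ((1 + a) * (1 - b)) :=
    aux_key (Real.sqrt 3) (Real.sqrt 5) F sA D q a b h3 hD_def hqD (by rw [← ht_def]; exact hD2)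
      hsub hab hD_pos.ne'
  have h1a : 0 < 1 - a := by linarith
  have h1a' : 0 < 1 + a := by linarith
  have h1b : 0 < 1 + b := by linarith
  have h1b' : 0 < 1 - b := by linarith
  have hRt : Nt / Dt = ((1 + a) * (1 - b)) / ((1 - a) * (1 + b)) := by
    rw [div_eq_div_iff hDt_pos.ne' (by positivity)]
    linear_combination hkey
  have hlog : Real.log (Nt / Dt) = La - Lb := by
    rw [hRt, Real.log_div (by positivity) (by positivity),
      Real.log_mul h1a'.ne' h1b'.ne', Real.log_mul h1a.ne' h1b.ne', hLa_def, hLb_def]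
    ring
  rw [hlog]
  have hcancel : 4 * Real.sqrt 5 * ((Real.sqrt 5)⁻¹ *
      (1/4 * La - 1/2 * Real.arctan a - (1/4 * Lb - 1/2 * Real.arctan b))) =
      La - Lb - 2 * (Real.arctan a - Real.arctan b) := by
    field_simp
    ring
  rw [hcancel, harc]
  ring
end
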